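/- For every graph H there exists a constant C = C(H) such that every planar graph on n vertices contains at most C·n^{α(H)} copies of H, where α(H) is the independence number of H. -/

import Mathlib

open SimpleGraph

/-- A set of vertices is independent: pairwise nonadjacent. -/
def IsIndepSet {V : Type*} (G : SimpleGraph V) (s : Set V) : Prop :=
  s.Pairwise fun a b => ¬ G.Adj a b

/-- The independence number of a graph: the maximum size of an independent set. -/
noncomputable def indepNum {V : Type*} (G : SimpleGraph V) : ℕ :=
  sSup {n | ∃ s : Finset V, _root_.IsIndepSet G (s : Set V) ∧ s.card = n}

/-- `H` is a minor of `G`: witnessed by disjoint connected branch sets. -/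
def HasMinor {V W : Type*} (G : SimpleGraph V) (H : SimpleGraph W) : Prop :=
  ∃ f : W → Set V,
    (∀ w, (f w).Nonempty) ∧
    (∀ w, (G.induce (f w)).Connected) ∧
    (∀ w₁ w₂, w₁ ≠ w₂ → Disjoint (f w₁) (f w₂)) ∧
    (∀ w₁ w₂, H.Adj w₁ w₂ → ∃ v₁ ∈ f w₁, ∃ v₂ ∈ f w₂, G.Adj v₁ v₂)

/-- Planarity of a finite simple graph, via Wagner's theorem: a graph is planar iff
it has neither `K₅` nor `K₃,₃` as a minor. -/
def IsPlanar {V : Type*} (G : SimpleGraph V) : Prop :=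
  ¬ HasMinor G (completeGraph (Fin 5)) ∧
  ¬ HasMinor G (completeBipartiteGraph (Fin 3) (Fin 3))

/-- The number of copies of `H` in `G`: the number of subgraphs of `G` isomorphic to `H`. -/
noncomputable def copyCount {V W : Type*} (H : SimpleGraph W) (G : SimpleGraph V) : ℕ :=
  {G' : G.Subgraph | Nonempty (G'.coe ≃g H)}.ncard

/-- `G` contains no subgraph isomorphic to `H`. -/
def ContainsNoCopy {V W : Type*} (H : SimpleGraph W) (G : SimpleGraph V) : Prop :=
  ∀ G' : G.Subgraph, ¬ Nonempty (G'.coe ≃g H)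

/-!
Planar graphs have no `K₅` minor. By Mader's argument, a graph with at least `2 ^ t * n` edges
has a `K_(t+1)` minor: if some edge lies in few triangles, contracting it loses few edges;
otherwise the neighbourhood of any vertex induces a graph dense enough for induction on `t`.
Hence every planar graph is `32`-degenerate, so its vertices can be ranked with each vertex
having at most `32` neighbours of higher rank. A copy `φ` of `H` is then determined by the images
of the vertices `w` that `φ` maps below all their neighbours, which form an independent set of
`H` (at most `n ^ α(H)` choices), together with, for every other `w`, a neighbour `w'` mapped
below it and the position of `φ w` among the higher neighbours of `φ w'`.
-/

open Finset

section Independence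

variable {W : Type*} [Fintype W] {H : SimpleGraph W}

lemma card_le_indepNum {s : Finset W} (hs : _root_.IsIndepSet H s) : #s ≤ _root_.indepNum H :=
  le_csSup ⟨Fintype.card W, by rintro _ ⟨t, -, rfl⟩; exact card_le_univ t⟩ ⟨s, hs, rfl⟩

lemma indepNum_le_card (H : SimpleGraph W) : _root_.indepNum H ≤ Fintype.card W :=
  csSup_le ⟨0, ∅, by simp [_root_.IsIndepSet]⟩ (by rintro _ ⟨t, -, rfl⟩; exact card_le_univ t)

end Independence

section Minor

variable {U V W α : Type*}

structure IsMinorModel (G : SimpleGraph V) (K : SimpleGraph W) (f : W → Set V) : Prop where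
  nonempty : ∀ w, (f w).Nonempty
  connected : ∀ w, (G.induce (f w)).Connected
  disjoint : ∀ w₁ w₂, w₁ ≠ w₂ → Disjoint (f w₁) (f w₂)
  exists_adj : ∀ w₁ w₂, K.Adj w₁ w₂ → ∃ v₁ ∈ f w₁, ∃ v₂ ∈ f w₂, G.Adj v₁ v₂

variable {G : SimpleGraph V} {M : SimpleGraph U} {K : SimpleGraph W}

lemma hasMinor_iff : HasMinor G K ↔ ∃ f, IsMinorModel G K f :=
  ⟨fun ⟨f, h₁, h₂, h₃, h₄⟩ => ⟨f, h₁, h₂, h₃, h₄⟩, fun ⟨f, h₁, h₂, h₃, h₄⟩ => ⟨f, h₁, h₂, h₃, h₄⟩⟩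

lemma IsMinorModel.hasMinor {f : W → Set V} (hf : IsMinorModel G K f) : HasMinor G K :=
  hasMinor_iff.2 ⟨f, hf⟩

lemma connected_induce_biUnion {S : Set U} {f : U → Set V} (hS : (M.induce S).Connected)
    (hf : ∀ u ∈ S, (G.induce (f u)).Connected)
    (hadj : ∀ u ∈ S, ∀ u' ∈ S, M.Adj u u' → ∃ v ∈ f u, ∃ v' ∈ f u', G.Adj v v') :
    (G.induce (⋃ u ∈ S, f u)).Connected := by
  have hsub : ∀ u ∈ S, f u ⊆ ⋃ u ∈ S, f u := fun u hu => Set.subset_biUnion_of_mem hu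
  have inner : ∀ (u : S) (v v' : f u),
      (G.induce (⋃ u ∈ S, f u)).Reachable ⟨v, hsub u u.2 v.2⟩ ⟨v', hsub u u.2 v'.2⟩ :=
    fun u v v' => ((hf u u.2).preconnected v v').map (induceHomOfLE _ (hsub u u.2)).toHom
  have walk : ∀ (a b : S) (_ : (M.induce S).Walk a b) (v : f a) (v' : f b),
      (G.induce (⋃ u ∈ S, f u)).Reachable ⟨v, hsub a a.2 v.2⟩ ⟨v', hsub b b.2 v'.2⟩ := by
    intro a b p
    induction p with
    | nil => exact inner _
    | @cons a c b hac _ ih =>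
      intro v v'
      obtain ⟨x₁, hx₁, x₂, hx₂, hx⟩ := hadj a a.2 c c.2 hac
      have hx' : (G.induce (⋃ u ∈ S, f u)).Adj ⟨x₁, hsub a a.2 hx₁⟩ ⟨x₂, hsub c c.2 hx₂⟩ := hx
      exact (inner a v ⟨x₁, hx₁⟩).trans (hx'.reachable.trans (ih ⟨x₂, hx₂⟩ v'))
  obtain ⟨u₀⟩ := hS.nonempty
  obtain ⟨v₀⟩ := (hf u₀ u₀.2).nonempty
  have : Nonempty (⋃ u ∈ S, f u) := ⟨⟨v₀, hsub u₀ u₀.2 v₀.2⟩⟩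
  refine ⟨fun ⟨v, hv⟩ ⟨v', hv'⟩ => ?_⟩
  obtain ⟨a, ha, hva⟩ := Set.mem_iUnion₂.1 hv
  obtain ⟨b, hb, hvb⟩ := Set.mem_iUnion₂.1 hv'
  obtain ⟨p⟩ := hS.preconnected ⟨a, ha⟩ ⟨b, hb⟩
  exact walk _ _ p ⟨v, hva⟩ ⟨v', hvb⟩

lemma IsMinorModel.comp {f : U → Set V} {g : W → Set U} (hf : IsMinorModel G M f)
    (hg : IsMinorModel M K g) : IsMinorModel G K fun w => ⋃ u ∈ g w, f u where
  nonempty w := by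
    obtain ⟨u, hu⟩ := hg.nonempty w
    obtain ⟨v, hv⟩ := hf.nonempty u
    exact ⟨v, Set.mem_biUnion hu hv⟩
  connected w := connected_induce_biUnion (hg.connected w) (fun u _ => hf.connected u)
    fun u _ u' _ => hf.exists_adj u u'
  disjoint w₁ w₂ h := by
    simp only [Set.disjoint_iUnion_left, Set.disjoint_iUnion_right]
    intro u₂ hu₂ u₁ hu₁
    exact hf.disjoint _ _ fun hu => Set.disjoint_left.1 (hg.disjoint _ _ h) hu₁ (by rwa [hu])
  exists_adj w₁ w₂ h := by
    obtain ⟨u₁, hu₁, u₂, hu₂, hu⟩ := hg.exists_adj _ _ h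
    obtain ⟨v₁, hv₁, v₂, hv₂, hv⟩ := hf.exists_adj _ _ hu
    exact ⟨v₁, Set.mem_biUnion hu₁ hv₁, v₂, Set.mem_biUnion hu₂ hv₂, hv⟩

lemma HasMinor.trans (hGM : HasMinor G M) (hMK : HasMinor M K) : HasMinor G K := by
  obtain ⟨f, hf⟩ := hasMinor_iff.1 hGM
  obtain ⟨g, hg⟩ := hasMinor_iff.1 hMK
  exact (hf.comp hg).hasMinor

lemma SimpleGraph.Copy.isMinorModel (e : Copy K G) : IsMinorModel G K fun w => {e w} where
  nonempty w := Set.singleton_nonempty _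
  connected w := by rw [induce_singleton_eq_top]; exact connected_top
  disjoint w₁ w₂ h := Set.disjoint_singleton.2 (e.injective.ne h)
  exists_adj w₁ w₂ h := ⟨_, rfl, _, rfl, e.toHom.map_adj h⟩

lemma SimpleGraph.Copy.hasMinor (e : Copy K G) : HasMinor G K :=
  e.isMinorModel.hasMinor

lemma IsMinorModel.cone {f : α → Set V} (hf : IsMinorModel G (completeGraph α) f) {x : V}
    (hx : ∀ a, f a ⊆ G.neighborSet x) :
    IsMinorModel G (completeGraph (Option α)) fun o => o.elim {x} f where
  nonempty
    | none => Set.singleton_nonempty x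
    | some a => hf.nonempty a
  connected
    | none => by rw [Option.elim_none, induce_singleton_eq_top]; exact connected_top
    | some a => hf.connected a
  disjoint
    | none, none, h => (h rfl).elim
    | none, some a, _ => Set.disjoint_singleton_left.2 fun h => G.loopless.irrefl x (hx a h)
    | some a, none, _ => Set.disjoint_singleton_right.2 fun h => G.loopless.irrefl x (hx a h)
    | some a, some b, h => hf.disjoint a b fun hab => h (hab ▸ rfl)
  exists_adj
    | none, none, h => (h rfl).elim
    | none, some a, _ => by
      obtain ⟨v, hv⟩ := hf.nonempty a
      exact ⟨x, rfl, v, hv, hx a hv⟩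
    | some a, none, _ => by
      obtain ⟨v, hv⟩ := hf.nonempty a
      exact ⟨v, hv, x, rfl, (hx a hv).symm⟩
    | some a, some b, h => hf.exists_adj a b fun hab => h (hab ▸ rfl)

lemma hasMinor_completeGraph_succ_of_subset_neighborSet {s : Set V} {x : V} {k : ℕ}
    (h : HasMinor (G.induce s) (completeGraph (Fin k))) (hs : s ⊆ G.neighborSet x) :
    HasMinor G (completeGraph (Fin (k + 1))) := by
  obtain ⟨g, hg⟩ := hasMinor_iff.1 h
  have hcone := ((Copy.induce G s).isMinorModel.comp hg).cone (x := x) fun a v hv => by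
    obtain ⟨u, -, rfl⟩ := Set.mem_iUnion₂.1 hv
    exact hs u.2
  exact hcone.hasMinor.trans (Iso.completeGraph (finSuccEquiv k)).toCopy.hasMinor

end Minor

namespace SimpleGraph

variable {V : Type*} {G : SimpleGraph V} {x y : V}

def contractEdge (G : SimpleGraph V) (x y : V) : SimpleGraph ({y}ᶜ : Set V) :=
  (fromRel fun a b => G.Adj a b ∨ a = x ∧ G.Adj y b).induce {y}ᶜ

lemma isMinorModel_contractEdge [DecidableEq V] (hxy : G.Adj x y) :
    IsMinorModel G (G.contractEdge x y) fun a => if (a : V) = x then {x, y} else {(a : V)} where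
  nonempty a := by split_ifs <;> simp
  connected a := by
    by_cases hax : (a : V) = x
    · rw [if_pos hax]; exact induce_pair_connected_of_adj hxy
    · rw [if_neg hax, induce_singleton_eq_top]; exact connected_top
  disjoint a b hab := by
    have hab' : (a : V) ≠ b := fun h => hab (Subtype.ext h)
    have ha : (a : V) ≠ y := a.2
    have hb : (b : V) ≠ y := b.2
    split_ifs with hax hbx <;> simp_all [eq_comm]
  exists_adj a b hab := by
    simp only [contractEdge, comap_adj, Function.Embedding.subtype_apply, fromRel_adj] at hab
    split_ifs with hax hbx hbx <;> aesop (add simp G.adj_comm)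

lemma hasMinor_contractEdge (hxy : G.Adj x y) : HasMinor G (G.contractEdge x y) := by
  classical exact (isMinorModel_contractEdge hxy).hasMinor

lemma induce_le_contractEdge : G.induce {y}ᶜ ≤ G.contractEdge x y := fun _ _ h =>
  ⟨fun hab => h.ne (Subtype.ext hab), Or.inl (Or.inl h)⟩

lemma card_edgeFinset_le_contractEdge [Fintype V] [DecidableEq V] [DecidableRel G.Adj]
    [DecidableRel (G.contractEdge x y).Adj] (hxy : G.Adj x y) :
    #G.edgeFinset
      ≤ #(G.contractEdge x y).edgeFinset + #{u ∈ G.neighborFinset x | G.Adj y u} + 1 := by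
  -- the neighbours of `y` that become new neighbours of `x`
  set D := G.neighborFinset y \ insert x (G.neighborFinset x)
  have hdel : #G.edgeFinset = #(G.induce {y}ᶜ).edgeFinset + G.degree y := by
    rw [card_edgeFinset_induce_compl_singleton, card_edgeFinset_deleteIncidenceSet,
      Nat.sub_add_cancel (G.degree_le_card_edgeFinset y)]
  have hdeg : G.degree y ≤ #D + #{u ∈ G.neighborFinset x | G.Adj y u} + 1 := by
    rw [← card_neighborFinset_eq_degree]
    calc #(G.neighborFinset y)
        ≤ #(D ∪ {u ∈ G.neighborFinset x | G.Adj y u} ∪ {x}) := card_le_card fun u hu => by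
          by_cases hux : u = x <;> by_cases hxu : G.Adj x u <;> simp_all [D]
      _ ≤ _ := (card_union_le _ _).trans (by grw [card_union_le, card_singleton])
  have hnew : #(G.induce {y}ᶜ).edgeFinset + #D ≤ #(G.contractEdge x y).edgeFinset := by
    let x' : ({y}ᶜ : Set V) := ⟨x, hxy.ne⟩
    let E := (D.subtype (· ∈ ({y}ᶜ : Set V))).image fun z => s(x', z)
    have hE : #E = #D := by
      rw [card_image_of_injective _ fun a b h => Sym2.congr_right.1 h, card_subtype,
        filter_true_of_mem]
      intro z hz
      simp only [D, mem_sdiff, mem_neighborFinset] at hz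
      exact hz.1.ne'
    have hdisj : Disjoint (G.induce {y}ᶜ).edgeFinset E := by
      rw [disjoint_right]
      intro e he
      obtain ⟨z, hz, rfl⟩ := mem_image.1 he
      simp_all [D, x']
    have hsub : (G.induce {y}ᶜ).edgeFinset ∪ E ⊆ (G.contractEdge x y).edgeFinset := by
      refine union_subset (edgeFinset_mono induce_le_contractEdge) fun e he => ?_
      obtain ⟨z, hz, rfl⟩ := mem_image.1 he
      simp only [D, mem_subtype, mem_sdiff, mem_neighborFinset, mem_insert, not_or] at hz
      rw [mem_edgeFinset, mem_edgeSet]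
      exact ⟨fun h => hz.2.1 h.symm, Or.inl (Or.inr ⟨rfl, hz.1⟩)⟩
    rw [← hE, ← card_union_of_disjoint hdisj]
    exact card_le_card hsub
  omega

section Degree

variable [DecidableRel G.Adj]

lemma degree_induce_finset (s : Finset V) (v : (s : Set V)) :
    (G.induce s).degree v = #{u ∈ s | G.Adj v u} := by
  rw [← card_neighborFinset_eq_degree, ← card_map (Function.Embedding.subtype _)]
  congr 1
  ext u
  simp [and_comm]

lemma mul_card_le_two_mul_card_edgeFinset_induce [DecidableEq V] (s : Finset V) {D : ℕ}
    (h : ∀ v ∈ s, D ≤ #{u ∈ s | G.Adj v u}) : D * #s ≤ 2 * #(G.induce s).edgeFinset := by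
  rw [← (G.induce s).sum_degrees_eq_twice_card_edges]
  calc D * #s = ∑ _v : (s : Set V), D := by simp [mul_comm]
    _ ≤ ∑ v : (s : Set V), (G.induce s).degree v :=
      sum_le_sum fun v _ => by rw [degree_induce_finset]; exact h v v.2

end Degree

end SimpleGraph

theorem hasMinor_completeGraph_of_card_edgeFinset (t : ℕ) {V : Type*} [Fintype V] [Nonempty V]
    (G : SimpleGraph V) [DecidableRel G.Adj] (h : 2 ^ t * Fintype.card V ≤ #G.edgeFinset) :
    HasMinor G (completeGraph (Fin (t + 1))) := by
  induction t generalizing V with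
  | zero =>
    show HasMinor G (completeGraph (Fin 1))
    exact Copy.hasMinor
      ⟨⟨fun _ => Classical.arbitrary V, fun h => (h (Subsingleton.elim _ _)).elim⟩,
        fun a b _ => Subsingleton.elim a b⟩
  | succ t ih =>
  induction hn : Fintype.card V using Nat.strong_induction_on generalizing V with
  | _ n ihn =>
  classical
  obtain ⟨m, rfl⟩ : ∃ m, n = m + 1 := Nat.exists_eq_add_one.2 (hn ▸ Fintype.card_pos)
  by_cases hsparse : ∃ x y, G.Adj x y ∧ #{u ∈ G.neighborFinset x | G.Adj y u} < 2 ^ (t + 1)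
  · obtain ⟨x, y, hxy, hcommon⟩ := hsparse
    have : Nonempty ({y}ᶜ : Set V) := ⟨⟨x, hxy.ne⟩⟩
    have hcard : Fintype.card ({y}ᶜ : Set V) = m := by
      rw [Fintype.card_compl_set, hn]; simp
    refine (hasMinor_contractEdge hxy).trans (ihn m (by omega) (G.contractEdge x y) ?_ hcard)
    have := card_edgeFinset_le_contractEdge hxy
    rw [hcard]
    rw [hn, mul_add, mul_one] at h
    omega
  · simp only [not_exists, not_and, not_lt] at hsparse
    obtain ⟨x, y, hxy⟩ := ne_bot_iff_exists_adj.1 <| edgeFinset_nonempty.1 <|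
      card_pos.1 (lt_of_lt_of_le (by rw [hn]; positivity) h)
    have : Nonempty (G.neighborFinset x : Set V) := ⟨⟨y, by simpa using hxy⟩⟩
    have hdense := mul_card_le_two_mul_card_edgeFinset_induce (G.neighborFinset x)
      fun z hz => hsparse x z (by simpa using hz)
    refine hasMinor_completeGraph_succ_of_subset_neighborSet (x := x)
      (ih (G.induce (G.neighborFinset x)) ?_) (by simp)
    simp only [coe_sort_coe, Fintype.card_coe]
    rw [pow_succ] at hdense
    linarith

namespace SimpleGraph

section Degeneracy

variable {V : Type*} {G : SimpleGraph V} [DecidableRel G.Adj]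

lemma exists_mem_card_adj_le_of_not_hasMinor [DecidableEq V] (t : ℕ)
    (hG : ¬ HasMinor G (completeGraph (Fin (t + 1)))) (s : Finset V) (hs : s.Nonempty) :
    ∃ v ∈ s, #{u ∈ s | G.Adj v u} ≤ 2 ^ (t + 1) := by
  by_contra! hdense
  have : Nonempty (s : Set V) := hs.to_subtype
  have := mul_card_le_two_mul_card_edgeFinset_induce s fun v hv => (hdense v hv).le
  refine hG ((Copy.induce G s).hasMinor.trans (hasMinor_completeGraph_of_card_edgeFinset t _ ?_))
  simp only [coe_sort_coe, Fintype.card_coe]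
  rw [pow_succ] at this
  linarith

def upperNeighborFinset [Fintype V] (G : SimpleGraph V) [DecidableRel G.Adj] (r : V → ℕ) (v : V) :
    Finset V :=
  {u | G.Adj v u ∧ r v < r u}

@[simp]
lemma mem_upperNeighborFinset [Fintype V] {r : V → ℕ} {v u : V} :
    u ∈ G.upperNeighborFinset r v ↔ G.Adj v u ∧ r v < r u := by
  simp [upperNeighborFinset]

lemma exists_injective_card_upperNeighborFinset_le [Fintype V] [DecidableEq V] {d : ℕ}
    (h : ∀ s : Finset V, s.Nonempty → ∃ v ∈ s, #{u ∈ s | G.Adj v u} ≤ d) :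
    ∃ r : V → ℕ, Function.Injective r ∧ ∀ v, #(G.upperNeighborFinset r v) ≤ d := by
  suffices ∀ s : Finset V, ∃ r : V → ℕ, Set.InjOn r s ∧
      ∀ v ∈ s, #{u ∈ s | G.Adj v u ∧ r v < r u} ≤ d by
    obtain ⟨r, hr, hdeg⟩ := this univ
    exact ⟨r, Set.injOn_univ.1 (by simpa using hr),
      fun v => by simpa [upperNeighborFinset] using hdeg v (mem_univ v)⟩
  intro s
  induction s using Finset.strongInduction with
  | H s ih =>
  rcases s.eq_empty_or_nonempty with rfl | hs
  · exact ⟨fun _ => 0, by simp, by simp⟩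
  obtain ⟨v, hv, hvd⟩ := h s hs
  obtain ⟨r, hr, hrd⟩ := ih (s.erase v) (erase_ssubset hv)
  refine ⟨fun u => if u = v then 0 else r u + 1, fun a ha b hb hab => ?_, fun u hu => ?_⟩
  · dsimp only at hab
    split_ifs at hab with hav hbv hbv
    · exact hav.trans hbv.symm
    · exact hr (mem_erase.2 ⟨hav, ha⟩) (mem_erase.2 ⟨hbv, hb⟩) (by omega)
  · by_cases huv : u = v
    · subst huv
      refine (card_le_card fun w hw => ?_).trans hvd
      simp only [mem_filter] at hw ⊢
      exact ⟨hw.1, hw.2.1⟩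
    · refine (card_le_card fun w hw => ?_).trans (hrd u (mem_erase.2 ⟨huv, hu⟩))
      simp only [mem_filter, mem_erase, huv, if_false] at hw ⊢
      have hwv : w ≠ v := by rintro rfl; simp at hw
      simp only [hwv, if_false] at hw
      exact ⟨⟨hwv, hw.1⟩, hw.2.1, by omega⟩

end Degeneracy

section Counting

variable {V W : Type*} [Fintype V] [DecidableEq V] {G : SimpleGraph V} [DecidableRel G.Adj]
  {H : SimpleGraph W} {r : V → ℕ} {d : ℕ}

open Classical in
noncomputable def parentCode (G : SimpleGraph V) [DecidableRel G.Adj] (H : SimpleGraph W)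
    (r : V → ℕ) (φ : W → V) (w : W) : Option (W × ℕ) :=
  if h : ∃ w', H.Adj w w' ∧ r (φ w') < r (φ w) then
    some (h.choose, (G.upperNeighborFinset r (φ h.choose)).toList.idxOf (φ w))
  else none

lemma parentCode_eq_none_iff {φ : W → V} {w : W} :
    parentCode G H r φ w = none ↔ ∀ w', H.Adj w w' → r (φ w) ≤ r (φ w') := by
  simp [parentCode]

lemma of_parentCode_eq_some {φ : W → V} {w w' : W} {i : ℕ}
    (h : parentCode G H r φ w = some (w', i)) :
    H.Adj w w' ∧ r (φ w') < r (φ w) ∧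
      (G.upperNeighborFinset r (φ w')).toList.idxOf (φ w) = i := by
  unfold parentCode at h
  split_ifs at h with hex
  obtain ⟨rfl, rfl⟩ := Prod.mk.inj (Option.some.inj h)
  exact ⟨hex.choose_spec.1, hex.choose_spec.2, rfl⟩

lemma isIndepSet_parentCode_eq_none (hr : Function.Injective r) (φ : H →g G) :
    _root_.IsIndepSet H {w | parentCode G H r φ w = none} := by
  intro w hw w' hw' _ hadj
  simp only [Set.mem_ofPred_eq, parentCode_eq_none_iff] at hw hw'
  have hne : r (φ w) ≠ r (φ w') := hr.ne (φ.map_adj hadj).ne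
  have := hw w' hadj
  have := hw' w hadj.symm
  omega

lemma parentCode_mem_insertNone [Fintype W] (φ : H →g G)
    (hdeg : ∀ v, #(G.upperNeighborFinset r v) ≤ d) (w : W) :
    parentCode G H r φ w ∈ (univ ×ˢ range d).insertNone := by
  match hc : parentCode G H r φ w with
  | none => exact mem_insertNone.2 fun _ h => absurd h (by simp)
  | some (w', i) =>
    obtain ⟨hadj, hlt, rfl⟩ := of_parentCode_eq_some hc
    have hmem : φ w ∈ (G.upperNeighborFinset r (φ w')).toList := by
      simpa using ⟨(φ.map_adj hadj).symm, hlt⟩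
    have := List.idxOf_lt_length_iff.2 hmem
    simp only [mem_insertNone, Option.mem_def, Option.some.injEq, mem_product, mem_univ,
      mem_range, true_and, forall_eq']
    simp only [length_toList] at this
    exact this.trans_le (hdeg _)

lemma eq_of_parentCode_eq {φ ψ : H →g G} (hcode : parentCode G H r φ = parentCode G H r ψ)
    (hnone : ∀ w, parentCode G H r φ w = none → φ w = ψ w) : φ = ψ := by
  ext w
  induction hn : r (φ w) using Nat.strong_induction_on generalizing w with
  | _ n ih =>
  match hc : parentCode G H r φ w with
  | none => exact hnone w hc
  | some (w', i) =>
    obtain ⟨hadj, hlt, hi⟩ := of_parentCode_eq_some hc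
    obtain ⟨hadj', hlt', hi'⟩ := of_parentCode_eq_some (hcode ▸ hc)
    have hw' : φ w' = ψ w' := ih _ (hn ▸ hlt) w' rfl
    rw [← hw'] at hlt' hi'
    have hmem : φ w ∈ (G.upperNeighborFinset r (φ w')).toList := by
      simpa using ⟨(φ.map_adj hadj).symm, hlt⟩
    exact (List.idxOf_inj hmem).1 (hi.trans hi'.symm)

lemma card_le_of_forall_parentCode_eq [Fintype W] (hr : Function.Injective r)
    (f₀ : Copy H G) (s : Finset (Copy H G))
    (hs : ∀ f ∈ s, parentCode G H r f.toHom = parentCode G H r f₀.toHom) :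
    #s ≤ Fintype.card V ^ _root_.indepNum H := by
  classical
  set S : Finset W := {w | parentCode G H r f₀.toHom w = none}
  have hS : #S ≤ _root_.indepNum H :=
    card_le_indepNum (by simpa [S] using isIndepSet_parentCode_eq_none hr f₀.toHom)
  calc #s ≤ #(univ : Finset (S → V)) := by
        refine card_le_card_of_injOn (fun f (w : S) => f w) (by simp) fun f₁ hf₁ f₂ hf₂ h => ?_
        replace hf₁ := hs f₁ hf₁
        replace hf₂ := hs f₂ hf₂
        exact Copy.ext fun w => DFunLike.congr_fun (eq_of_parentCode_eq (hf₁.trans hf₂.symm)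
          fun w hw => congrFun h ⟨w, by simpa [S] using (congrFun hf₁ w).symm.trans hw⟩) w
    _ = Fintype.card V ^ #S := by simp
    _ ≤ Fintype.card V ^ _root_.indepNum H := by
        rcases Nat.eq_zero_or_pos (Fintype.card V) with hV | hV
        · have : IsEmpty W := ⟨fun w => (Fintype.card_eq_zero_iff.1 hV).elim (f₀ w)⟩
          have hα : _root_.indepNum H = 0 :=
            Nat.le_zero.1 ((indepNum_le_card H).trans_eq Fintype.card_eq_zero)
          rw [hα, Nat.le_zero.1 (hS.trans_eq hα)]
        · exact Nat.pow_le_pow_right hV hS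

theorem natCard_copy_le_of_card_upperNeighborFinset_le [Fintype W] (hr : Function.Injective r)
    (hdeg : ∀ v, #(G.upperNeighborFinset r v) ≤ d) :
    Nat.card (Copy H G)
      ≤ (Fintype.card W * d + 1) ^ Fintype.card W * Fintype.card V ^ _root_.indepNum H := by
  classical
  have := FunLike.finite (Copy H G)
  have := Fintype.ofFinite (Copy H G)
  let code (f : Copy H G) : W → Option (W × ℕ) := parentCode G H r f.toHom
  have hfiber : ∀ c ∈ univ.image code, #{f ∈ univ | code f = c}
      ≤ Fintype.card V ^ _root_.indepNum H := by
    rintro _ hc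
    obtain ⟨f₀, -, rfl⟩ := mem_image.1 hc
    exact card_le_of_forall_parentCode_eq hr f₀ _ fun f hf => (mem_filter.1 hf).2
  calc Nat.card (Copy H G) = #(univ : Finset (Copy H G)) := by
        rw [Nat.card_eq_fintype_card, card_univ]
    _ ≤ Fintype.card V ^ _root_.indepNum H * #(univ.image code) :=
        card_le_mul_card_image _ _ hfiber
    _ ≤ Fintype.card V ^ _root_.indepNum H
          * #(Fintype.piFinset fun _ : W => (univ ×ˢ range d).insertNone) := by
        gcongr
        intro c hc
        obtain ⟨f, -, rfl⟩ := mem_image.1 hc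
        exact Fintype.mem_piFinset.2 (parentCode_mem_insertNone f.toHom hdeg)
    _ = _ := by
        simp only [Fintype.card_piFinset, card_insertNone, card_product, card_univ, card_range,
          prod_const]
        ring

end Counting

end SimpleGraph

lemma copyCount_le_natCard_copy {V W : Type*} [Finite V] [Finite W] (H : SimpleGraph W)
    (G : SimpleGraph V) : _root_.copyCount H G ≤ Nat.card (Copy H G) := by
  have hrange : {G' : G.Subgraph | Nonempty (G'.coe ≃g H)}
      = Set.range (Copy.toSubgraph (A := H) (B := G)) := by
    ext G'
    simp only [Copy.range_toSubgraph, Set.mem_ofPred_eq]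
    exact ⟨fun ⟨e⟩ => ⟨e.symm⟩, fun ⟨e⟩ => ⟨e.symm⟩⟩
  have := FunLike.finite (Copy H G)
  rw [_root_.copyCount, hrange, ← Set.image_univ, ← Set.ncard_univ]
  exact Set.ncard_image_le Set.finite_univ

/-- For every graph `H` there is a constant `C` such that every planar graph on
`n` vertices contains at most `C·n^α(H)` copies of `H`. -/
theorem stmt6 {W : Type} [Fintype W] (H : SimpleGraph W) :
    ∃ C : ℕ, ∀ (V : Type) [Fintype V] (G : SimpleGraph V), IsPlanar G →
      _root_.copyCount H G ≤ C * Fintype.card V ^ _root_.indepNum H := by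
  classical
  refine ⟨(Fintype.card W * 2 ^ 5 + 1) ^ Fintype.card W, fun V _ G hG => ?_⟩
  obtain ⟨r, hr, hdeg⟩ := exists_injective_card_upperNeighborFinset_le
    (exists_mem_card_adj_le_of_not_hasMinor 4 hG.1)
  exact (copyCount_le_natCard_copy H G).trans
    (natCard_copy_le_of_card_upperNeighborFinset_le hr hdeg)
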